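/- Let (Ω, F, 𝔽, P, B, X, α) be a weak solution of X_t = ∫_0^t α_s ds + B_t with α progressively measurable with respect to the augmented natural filtration of B, define E_k := {∫_0^{t_k} |α_t − μ(t, X_·)| dt = 0} for k ≤ −1 and E_∞ := lim_{k→−∞} E_k (the increasing limit). If P(E_∞) = 1, then there exist processes α̂ and X̂, progressively measurable with respect to the augmented natural filtration of B, such that α̂_t = μ(t, X̂_·) and X̂_t = ∫_0^t α̂_s ds + B_t for dt×dP-a.e. (t,ω); that is, Tsirelson's SDE then admits a strong solution. -/

import Mathlib

open MeasureTheory ProbabilityTheory Filter Set Matrix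
open scoped Classical

noncomputable section

/-- The σ-algebra generated by the `P`-null sets. -/
def nullSets {Ω : Type*} [MeasurableSpace Ω] (P : Measure Ω) : MeasurableSpace Ω :=
  MeasurableSpace.generateFrom {s : Set Ω | P s = 0}

/-- The natural filtration of a process `u`. -/
def natFilt {Ω E : Type*} [MeasurableSpace E] (u : ℝ → Ω → E) (s : ℝ) :
    MeasurableSpace Ω :=
  ⨆ r ∈ Set.Icc (0 : ℝ) s, MeasurableSpace.comap (u r) inferInstance

/-- The `P`-augmented natural filtration of a process `u`. -/
def augFilt {Ω E : Type*} [MeasurableSpace Ω] [MeasurableSpace E] (P : Measure Ω)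
    (u : ℝ → Ω → E) (s : ℝ) : MeasurableSpace Ω :=
  natFilt u s ⊔ nullSets P

/-- Progressive measurability of a process `u` with respect to a family of σ-algebras `F`. -/
def ProgMeas {Ω E : Type*} [MeasurableSpace E] (F : ℝ → MeasurableSpace Ω)
    (u : ℝ → Ω → E) : Prop :=
  ∀ s : ℝ, 0 ≤ s →
    @Measurable (Set.Icc (0 : ℝ) s × Ω) E
      (MeasurableSpace.prod inferInstance (F s)) _ (fun p => u p.1 p.2)

/-- Tsirelson's drift, relative to the time sequence `t : ℤ → ℝ`:
`μ(s, x) = fract ((x (t k) - x (t (k-1))) / (t k - t (k-1)))` for `s ∈ [t k, t (k+1))`,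
`k ≤ -1`, and `0` otherwise. -/
def tsirelsonDrift (t : ℤ → ℝ) (s : ℝ) (x : ℝ → ℝ) : ℝ :=
  if h : ∃ k : ℤ, k ≤ -1 ∧ t k ≤ s ∧ s < t (k + 1) then
    Int.fract ((x (t h.choose) - x (t (h.choose - 1))) / (t h.choose - t (h.choose - 1)))
  else 0

/-- The hypotheses on the time sequence: `t 0 = T`, strictly increasing, and
`t k ↓ 0` as `k → -∞`. -/
def TsirelsonTimes (T : ℝ) (t : ℤ → ℝ) : Prop :=
  t 0 = T ∧ (∀ k : ℤ, k ≤ 0 → t (k - 1) < t k) ∧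
    Tendsto (fun n : ℕ => t (-(n : ℤ))) atTop (nhds 0)

/-- `B` is a one-dimensional `F`-Brownian motion under `P`: continuous paths started at `0`,
adapted, with increments that are centered Gaussian and independent of the past. -/
def IsBM {Ω : Type*} [MeasurableSpace Ω] (P : Measure Ω) (F : ℝ → MeasurableSpace Ω)
    (B : ℝ → Ω → ℝ) : Prop :=
  (∀ ω, B 0 ω = 0) ∧ (∀ ω, Continuous fun s => B s ω) ∧
  (∀ s : ℝ, 0 ≤ s → Measurable[F s] (B s)) ∧
  (∀ s u : ℝ, 0 ≤ s → s < u →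
    Measure.map (fun ω => B u ω - B s ω) P = gaussianReal 0 ((u - s).toNNReal) ∧
    Indep (MeasurableSpace.comap (fun ω => B u ω - B s ω) inferInstance) (F s) P)


/-!
On `E_{k₀}` the drift `α` equals Tsirelson's drift of `X` up to time `t k₀`, so the grid values
`X (t j)`, `j ≤ k₀`, follow the Euler scheme `x_{j+1} = x_j + fract (slope_j) (t_{j+1} - t_j)
+ (B_{t_{j+1}} - B_{t_j})`. The `k`-th approximate drift uses `α` before `t k` and, afterwards,
the drift of the Euler scheme started from the grid values of `∫ α + B`; it is progressively
measurable for the Brownian filtration because `α` is. On `E_{k₀}` all approximations with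
`k ≤ k₀` agree a.e., so their `limsup` as `k → -∞`, `α̂`, is the `k₀`-th one. The process
`X̂ = ∫ α̂ + B` passes through the same grid values, hence `α̂ = μ(·, X̂)` a.e.
-/

namespace TsirelsonTimes

variable {T : ℝ} {t : ℤ → ℝ}

theorem strictMonoOn (ht : TsirelsonTimes T t) : StrictMonoOn t (Iic 0) :=
  strictMonoOn_Iic_of_lt_succ fun k hk => by
    simpa [Order.succ_eq_add_one] using ht.2.1 (k + 1) (by omega)

theorem lt {j k : ℤ} (ht : TsirelsonTimes T t) (hjk : j < k) (hk : k ≤ 0) : t j < t k :=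
  ht.strictMonoOn (show j ≤ 0 by omega) hk hjk

theorem le {j k : ℤ} (ht : TsirelsonTimes T t) (hjk : j ≤ k) (hk : k ≤ 0) : t j ≤ t k :=
  ht.strictMonoOn.monotoneOn (show j ≤ 0 by omega) hk hjk

theorem lt_iff {j k : ℤ} (ht : TsirelsonTimes T t) (hj : j ≤ 0) (hk : k ≤ 0) :
    t j < t k ↔ j < k :=
  ht.strictMonoOn.lt_iff_lt hj hk

theorem nonneg {k : ℤ} (ht : TsirelsonTimes T t) (hk : k ≤ 0) : 0 ≤ t k := by
  have hanti : Antitone fun n : ℕ => t (-n) := fun m n hmn => ht.le (by omega) (by omega)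
  simpa [Int.toNat_of_nonneg (by omega : 0 ≤ -k)] using hanti.le_of_tendsto ht.2.2 (-k).toNat

theorem le_T {k : ℤ} (ht : TsirelsonTimes T t) (hk : k ≤ 0) : t k ≤ T :=
  ht.1 ▸ ht.le hk le_rfl

end TsirelsonTimes

/-- The index `j ≤ -1` of the interval `[t j, t (j + 1))` containing `s`, and `0` if there is
none. -/
def intervalIndex (t : ℤ → ℝ) (s : ℝ) : ℤ :=
  if h : ∃ k : ℤ, k ≤ -1 ∧ t k ≤ s ∧ s < t (k + 1) then h.choose else 0

/-- The value of Tsirelson's drift on `[t j, t (j + 1))`, read off the grid values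
`y i = x (t i)`. -/
def gridDrift (t : ℤ → ℝ) (y : ℤ → ℝ) (j : ℤ) : ℝ :=
  if j ≤ -1 then Int.fract ((y j - y (j - 1)) / (t j - t (j - 1))) else 0

section IntervalIndex

variable {T : ℝ} {t : ℤ → ℝ}

theorem tsirelsonDrift_eq_gridDrift (t : ℤ → ℝ) (s : ℝ) (x : ℝ → ℝ) :
    tsirelsonDrift t s x = gridDrift t (fun j => x (t j)) (intervalIndex t s) := by
  unfold tsirelsonDrift intervalIndex gridDrift
  split_ifs with h h' <;> first | rfl | omega

theorem gridDrift_mem_Icc (t y : ℤ → ℝ) (j : ℤ) : gridDrift t y j ∈ Icc (0 : ℝ) 1 := by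
  unfold gridDrift
  split_ifs
  exacts [⟨Int.fract_nonneg _, (Int.fract_lt_one _).le⟩, ⟨le_rfl, zero_le_one⟩]

theorem gridDrift_congr {y y' : ℤ → ℝ} {j : ℤ}
    (h : j ≤ -1 → y j = y' j ∧ y (j - 1) = y' (j - 1)) : gridDrift t y j = gridDrift t y' j := by
  unfold gridDrift
  split_ifs with hj
  · rw [(h hj).1, (h hj).2]
  · rfl

theorem intervalIndex_spec {s : ℝ} (h : intervalIndex t s ≤ -1) :
    t (intervalIndex t s) ≤ s ∧ s < t (intervalIndex t s + 1) := by
  unfold intervalIndex at h ⊢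
  split_ifs at h ⊢ with hex
  · exact hex.choose_spec.2
  · omega

theorem intervalIndex_eq (ht : TsirelsonTimes T t) {j : ℤ} {s : ℝ} (hj : j ≤ -1)
    (hjs : t j ≤ s) (hsj : s < t (j + 1)) : intervalIndex t s = j := by
  have hex : ∃ k : ℤ, k ≤ -1 ∧ t k ≤ s ∧ s < t (k + 1) := ⟨j, hj, hjs, hsj⟩
  obtain ⟨hk, hks, hsk⟩ := hex.choose_spec
  rw [intervalIndex, dif_pos hex]
  have h₁ := (ht.lt_iff (by omega) (by omega)).1 (hks.trans_lt hsj)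
  have h₂ := (ht.lt_iff (by omega) (by omega)).1 (hjs.trans_lt hsk)
  omega

theorem intervalIndex_le_of_le (ht : TsirelsonTimes T t) {k : ℤ} {s : ℝ}
    (hs : s ≤ t k) (h : intervalIndex t s ≤ -1) : intervalIndex t s ≤ k := by
  by_contra hlt
  exact (intervalIndex_spec h).1.not_gt (hs.trans_lt (ht.lt (by omega) (by omega)))

theorem intervalIndex_le_iff {s : ℝ} :
    intervalIndex t s ≤ -1 ↔ ∃ k : ℤ, k ≤ -1 ∧ t k ≤ s ∧ s < t (k + 1) := by
  unfold intervalIndex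
  split_ifs with hex
  · exact iff_of_true hex.choose_spec.1 hex
  · exact iff_of_false (by omega) hex

theorem intervalIndex_of_not_le {s : ℝ} (h : ¬ intervalIndex t s ≤ -1) :
    intervalIndex t s = 0 :=
  dif_neg (intervalIndex_le_iff.not.1 h)

theorem measurable_intervalIndex (ht : TsirelsonTimes T t) : Measurable (intervalIndex t) := by
  refine measurable_to_countable' fun j => ?_
  have hfib : intervalIndex t ⁻¹' {j} = ({_s | j ≤ -1} ∩ Ico (t j) (t (j + 1))) ∪
      ({_s | j = 0} ∩ (⋃ i : ℤ, ⋃ _ : i ≤ -1, Ico (t i) (t (i + 1)))ᶜ) := by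
    ext s
    simp only [mem_preimage, mem_singleton_iff, mem_union, mem_inter_iff, mem_ofPred_eq, mem_Ico,
      mem_compl_iff, mem_iUnion, exists_prop]
    constructor
    · rintro rfl
      by_cases h : intervalIndex t s ≤ -1
      · exact Or.inl ⟨h, intervalIndex_spec h⟩
      · exact Or.inr ⟨intervalIndex_of_not_le h, intervalIndex_le_iff.not.1 h⟩
    · rintro (⟨hj, hjs, hsj⟩ | ⟨rfl, hnone⟩)
      · exact intervalIndex_eq ht hj hjs hsj
      · exact intervalIndex_of_not_le (intervalIndex_le_iff.not.2 hnone)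
  rw [hfib]
  exact ((MeasurableSet.const _).inter measurableSet_Ico).union ((MeasurableSet.const _).inter
    (MeasurableSet.iUnion fun i => MeasurableSet.iUnion fun _ => measurableSet_Ico).compl)

end IntervalIndex

theorem forall_le_induction {k J : ℤ} {p : ℤ → Prop} (base : ∀ j ≤ k, j ≤ J → p j)
    (succ : ∀ j, k ≤ j → j < J → (∀ i ≤ j, p i) → p (j + 1)) : ∀ j ≤ J, p j := by
  have key : ∀ n, k ≤ n → ∀ i ≤ n, i ≤ J → p i := by
    refine Int.leInduction (fun i hi hiJ => base i hi hiJ) fun n hkn ih i hin hiJ => ?_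
    rcases (show i ≤ n ∨ i = n + 1 by omega) with hi | rfl
    · exact ih i hi (by omega)
    · exact succ n hkn (by omega) fun i hi => ih i hi (by omega)
  intro j hj
  exact key (max j k) (le_max_right _ _) j (le_max_left _ _) hj

/-- The Euler step of Tsirelson's equation driven by `b`: the value at `t (j + 1)` from the values
`y₁` at `t j` and `y₀` at `t (j - 1)`. -/
def tsirelsonStep (t : ℤ → ℝ) (b : ℝ → ℝ) (j : ℤ) (y₁ y₀ : ℝ) : ℝ :=
  y₁ + Int.fract ((y₁ - y₀) / (t j - t (j - 1))) * (t (j + 1) - t j) + (b (t (j + 1)) - b (t j))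

def tsirelsonGrid (t : ℤ → ℝ) (b : ℝ → ℝ) (k : ℤ) (y : ℤ → ℝ) (j : ℤ) : ℝ :=
  if h : j ≤ k then y j
  else tsirelsonStep t b (j - 1) (tsirelsonGrid t b k y (j - 1)) (tsirelsonGrid t b k y (j - 2))
termination_by (j - k).toNat
decreasing_by all_goals omega

section TsirelsonGrid

variable {t : ℤ → ℝ} {b : ℝ → ℝ} {k : ℤ} {y : ℤ → ℝ}

theorem tsirelsonGrid_of_le {j : ℤ} (h : j ≤ k) : tsirelsonGrid t b k y j = y j := by
  rw [tsirelsonGrid, dif_pos h]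

theorem tsirelsonGrid_add_one {j : ℤ} (h : k ≤ j) :
    tsirelsonGrid t b k y (j + 1) =
      tsirelsonStep t b j (tsirelsonGrid t b k y j) (tsirelsonGrid t b k y (j - 1)) := by
  rw [tsirelsonGrid, dif_neg (by omega), add_sub_cancel_right, show j + 1 - 2 = j - 1 by ring]

theorem tsirelsonGrid_eq_of_le {k₀ : ℤ} (hk : k ≤ k₀)
    (hy : ∀ j, k ≤ j → j < k₀ → y (j + 1) = tsirelsonStep t b j (y j) (y (j - 1))) :
    tsirelsonGrid t b k y = tsirelsonGrid t b k₀ y := by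
  funext j
  refine forall_le_induction (k := k) (J := j)
    (p := fun i => tsirelsonGrid t b k y i = tsirelsonGrid t b k₀ y i)
    (fun i hi _ => ?_) (fun i hki _ ih => ?_) j le_rfl
  · rw [tsirelsonGrid_of_le hi, tsirelsonGrid_of_le (hi.trans hk)]
  · rw [tsirelsonGrid_add_one hki, ih i le_rfl, ih (i - 1) (by omega)]
    rcases lt_or_ge i k₀ with hik | hik
    · rw [tsirelsonGrid_of_le (show i + 1 ≤ k₀ by omega), tsirelsonGrid_of_le hik.le,
        tsirelsonGrid_of_le (show i - 1 ≤ k₀ by omega), hy i hki hik]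
    · rw [tsirelsonGrid_add_one hik]

end TsirelsonGrid

def addDrift (b a : ℝ → ℝ) (s : ℝ) : ℝ := (∫ r in Icc (0 : ℝ) s, a r) + b s

def approxGrid (t : ℤ → ℝ) (b a : ℝ → ℝ) (k : ℤ) : ℤ → ℝ :=
  tsirelsonGrid t b k fun j => addDrift b a (t j)

def approxDrift (t : ℤ → ℝ) (b a : ℝ → ℝ) (k : ℤ) (s : ℝ) : ℝ :=
  if s < t k then a s else gridDrift t (approxGrid t b a k) (intervalIndex t s)

def limDrift (t : ℤ → ℝ) (b a : ℝ → ℝ) (s : ℝ) : ℝ :=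
  limsup (fun n : ℕ => approxDrift t b a (-n) s) atTop

theorem addDrift_eq_of_ae_eq_const {b f : ℝ → ℝ} {r s c : ℝ} (hf : IntegrableOn f (Icc 0 s))
    (hr : 0 ≤ r) (hrs : r ≤ s) (hc : ∀ᵐ u ∂volume.restrict (Ioo r s), f u = c) :
    addDrift b f s = addDrift b f r + c * (s - r) + (b s - b r) := by
  have hsplit : ∫ u in Icc 0 s, f u = (∫ u in Icc 0 r, f u) + ∫ u in Ioc r s, f u := by
    rw [← Icc_union_Ioc_eq_Icc hr hrs]
    exact setIntegral_union ((Iic_disjoint_Ioc le_rfl).mono_left Icc_subset_Iic_self)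
      measurableSet_Ioc (hf.mono_set (Icc_subset_Icc_right hrs))
      (hf.mono_set (Ioc_subset_Icc_self.trans (Icc_subset_Icc_left hr)))
  have hconst : ∫ u in Ioc r s, f u = c * (s - r) := by
    rw [integral_Ioc_eq_integral_Ioo, integral_congr_ae hc, setIntegral_const, measureReal_def,
      Real.volume_Ioo, ENNReal.toReal_ofReal (sub_nonneg.2 hrs), smul_eq_mul, mul_comm]
  rw [addDrift, addDrift, hsplit, hconst]
  ring

theorem ae_eq_of_integral_abs_sub_eq_zero {γ : Type*} [MeasurableSpace γ] {μ : Measure γ}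
    {f g : γ → ℝ} (hf : Integrable f μ) (hg : Integrable g μ) (h : ∫ u, |f u - g u| ∂μ = 0) :
    f =ᵐ[μ] g := by
  filter_upwards [(integral_eq_zero_iff_of_nonneg (fun u => abs_nonneg (f u - g u))
    (hf.sub hg).abs).1 h] with u hu
  exact sub_eq_zero.1 (abs_eq_zero.1 hu)

theorem integrableOn_gridDrift_intervalIndex {T : ℝ} {t : ℤ → ℝ} (ht : TsirelsonTimes T t)
    (y : ℤ → ℝ) (c : ℝ) : IntegrableOn (fun s => gridDrift t y (intervalIndex t s)) (Icc 0 c) := by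
  refine .of_bound measure_Icc_lt_top ((measurable_of_countable (gridDrift t y)).comp
    (measurable_intervalIndex ht)).aestronglyMeasurable 1 (Eventually.of_forall fun s => ?_)
  obtain ⟨h₀, h₁⟩ := gridDrift_mem_Icc t y (intervalIndex t s)
  rwa [Real.norm_eq_abs, abs_of_nonneg h₀]

/-- What `ω ∈ E_{k₀}` says about the paths `b = B(ω)`, `a = α(ω)`, `x = X(ω)` of a weak
solution. -/
structure SolvesTsirelsonUpTo (t : ℤ → ℝ) (b a x : ℝ → ℝ) (k₀ : ℤ) : Prop where
  grid_eq : ∀ j ≤ 0, x (t j) = addDrift b a (t j)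
  integrableOn : IntegrableOn a (Icc 0 (t k₀))
  ae_eq : ∀ᵐ u ∂volume.restrict (Icc 0 (t k₀)), a u = tsirelsonDrift t u x

namespace SolvesTsirelsonUpTo

variable {T : ℝ} {t : ℤ → ℝ} {a b x : ℝ → ℝ} {k₀ : ℤ}

/-- Between two grid points below `t k₀` the drift is the constant value of `μ` there. -/
theorem addDrift_add_one (h : SolvesTsirelsonUpTo t b a x k₀) (ht : TsirelsonTimes T t)
    (hk₀ : k₀ ≤ 0) {j : ℤ} (hj : j < k₀) :
    addDrift b a (t (j + 1)) =
      tsirelsonStep t b j (addDrift b a (t j)) (addDrift b a (t (j - 1))) := by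
  have hsub : Ioo (t j) (t (j + 1)) ⊆ Icc 0 (t k₀) := fun u hu =>
    ⟨(ht.nonneg (by omega)).trans hu.1.le, hu.2.le.trans (ht.le (by omega) hk₀)⟩
  have hc : ∀ᵐ u ∂volume.restrict (Ioo (t j) (t (j + 1))), a u =
      Int.fract ((addDrift b a (t j) - addDrift b a (t (j - 1))) / (t j - t (j - 1))) := by
    filter_upwards [ae_restrict_of_ae_restrict_of_subset hsub h.ae_eq,
      ae_restrict_mem measurableSet_Ioo] with u hu hmem
    rw [hu, tsirelsonDrift_eq_gridDrift, intervalIndex_eq ht (by omega) hmem.1.le hmem.2,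
      gridDrift, if_pos (by omega), h.grid_eq j (by omega), h.grid_eq (j - 1) (by omega)]
  rw [addDrift_eq_of_ae_eq_const (h.integrableOn.mono_set
    (Icc_subset_Icc_right (ht.le (by omega) hk₀))) (ht.nonneg (by omega))
    (ht.le (by omega) (by omega)) hc, tsirelsonStep]

theorem approxGrid_eq (h : SolvesTsirelsonUpTo t b a x k₀) (ht : TsirelsonTimes T t)
    (hk₀ : k₀ ≤ 0) {k : ℤ} (hk : k ≤ k₀) : approxGrid t b a k = approxGrid t b a k₀ :=
  tsirelsonGrid_eq_of_le hk fun _ _ hj => h.addDrift_add_one ht hk₀ hj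

theorem tsirelsonDrift_eq (h : SolvesTsirelsonUpTo t b a x k₀) (ht : TsirelsonTimes T t)
    {s : ℝ} (hs : s ≤ t k₀) :
    tsirelsonDrift t s x = gridDrift t (approxGrid t b a k₀) (intervalIndex t s) := by
  rw [tsirelsonDrift_eq_gridDrift]
  refine gridDrift_congr fun hj => ?_
  have hjk := intervalIndex_le_of_le ht hs hj
  rw [approxGrid, tsirelsonGrid_of_le hjk, tsirelsonGrid_of_le (by omega),
    h.grid_eq _ (by omega), h.grid_eq _ (by omega)]
  exact ⟨rfl, rfl⟩

theorem limDrift_eq (h : SolvesTsirelsonUpTo t b a x k₀) (ht : TsirelsonTimes T t)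
    (hk₀ : k₀ ≤ 0) {s : ℝ} (hs : s ≤ t k₀ → a s = tsirelsonDrift t s x) :
    limDrift t b a s = gridDrift t (approxGrid t b a k₀) (intervalIndex t s) := by
  have hstab : ∀ k ≤ k₀,
      approxDrift t b a k s = gridDrift t (approxGrid t b a k₀) (intervalIndex t s) := by
    intro k hk
    unfold approxDrift
    split_ifs with hsk
    · have hsk₀ := hsk.le.trans (ht.le hk hk₀)
      rw [hs hsk₀, h.tsirelsonDrift_eq ht hsk₀]
    · rw [h.approxGrid_eq ht hk₀ hk]
  rw [limDrift, limsup_congr (eventually_atTop.2 ⟨(-k₀).toNat, fun n hn => hstab _ (by omega)⟩),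
    limsup_const]

theorem ae_limDrift_eq (h : SolvesTsirelsonUpTo t b a x k₀) (ht : TsirelsonTimes T t)
    (hk₀ : k₀ ≤ 0) :
    ∀ᵐ s, 0 ≤ s → limDrift t b a s = gridDrift t (approxGrid t b a k₀) (intervalIndex t s) := by
  filter_upwards [(ae_restrict_iff' measurableSet_Icc).1 h.ae_eq] with s hs hs₀
  exact h.limDrift_eq ht hk₀ fun hsk => hs ⟨hs₀, hsk⟩

theorem addDrift_limDrift (h : SolvesTsirelsonUpTo t b a x k₀) (ht : TsirelsonTimes T t)
    (hk₀ : k₀ ≤ 0) {j : ℤ} (hj : j ≤ 0) :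
    addDrift b (limDrift t b a) (t j) = approxGrid t b a k₀ j := by
  set G := approxGrid t b a k₀
  set g : ℝ → ℝ := fun s => gridDrift t G (intervalIndex t s)
  have hlim : ∀ c, addDrift b (limDrift t b a) c = addDrift b g c := fun c => by
    rw [addDrift, addDrift, setIntegral_congr_ae measurableSet_Icc
      ((h.ae_limDrift_eq ht hk₀).mono fun u hu hmem => hu hmem.1)]
  rw [hlim]
  refine forall_le_induction (k := k₀) (J := 0) (p := fun j => addDrift b g (t j) = G j)
    (fun i hi _ => ?_) (fun i hi hi₀ ih => ?_) j hj
  · have hag : ∀ᵐ u ∂volume.restrict (Icc 0 (t i)), g u = a u := by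
      filter_upwards [ae_restrict_of_ae_restrict_of_subset
        (Icc_subset_Icc_right (ht.le hi hk₀)) h.ae_eq, ae_restrict_mem measurableSet_Icc]
        with u hu hmem
      rw [hu, h.tsirelsonDrift_eq ht (hmem.2.trans (ht.le hi hk₀))]
    have hGi : G i = addDrift b a (t i) := tsirelsonGrid_of_le hi
    rw [hGi, addDrift, addDrift, integral_congr_ae hag]
  · have hc : ∀ᵐ u ∂volume.restrict (Ioo (t i) (t (i + 1))), g u =
        Int.fract ((G i - G (i - 1)) / (t i - t (i - 1))) := by
      filter_upwards [ae_restrict_mem measurableSet_Ioo] with u hu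
      simp only [g, intervalIndex_eq ht (by omega) hu.1.le hu.2, gridDrift,
        if_pos (by omega : i ≤ -1)]
    have hGi : G (i + 1) = tsirelsonStep t b i (G i) (G (i - 1)) := tsirelsonGrid_add_one hi
    rw [addDrift_eq_of_ae_eq_const (integrableOn_gridDrift_intervalIndex ht G _)
      (ht.nonneg (by omega)) (ht.le (by omega) (by omega)) hc, ih i le_rfl, hGi, tsirelsonStep]

theorem ae_limDrift_eq_tsirelsonDrift (h : SolvesTsirelsonUpTo t b a x k₀)
    (ht : TsirelsonTimes T t) (hk₀ : k₀ ≤ 0) (c : ℝ) :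
    ∀ᵐ s ∂volume.restrict (Icc 0 c),
      limDrift t b a s = tsirelsonDrift t s (addDrift b (limDrift t b a)) := by
  refine (ae_restrict_iff' measurableSet_Icc).2 ?_
  filter_upwards [h.ae_limDrift_eq ht hk₀] with s hs hs₀
  rw [hs hs₀.1, tsirelsonDrift_eq_gridDrift]
  exact gridDrift_congr fun hj => ⟨(h.addDrift_limDrift ht hk₀ (by omega)).symm,
    (h.addDrift_limDrift ht hk₀ (by omega)).symm⟩

end SolvesTsirelsonUpTo

theorem solvesTsirelsonUpTo_of_integral_eq_zero {T : ℝ} {t : ℤ → ℝ} {a b x : ℝ → ℝ} {k₀ : ℤ}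
    (ht : TsirelsonTimes T t) (hx : ∀ j ≤ 0, x (t j) = addDrift b a (t j))
    (ha : IntegrableOn a (Icc 0 (t k₀)))
    (hE : ∫ u in Icc 0 (t k₀), |a u - tsirelsonDrift t u x| = 0) :
    SolvesTsirelsonUpTo t b a x k₀ where
  grid_eq := hx
  integrableOn := ha
  ae_eq := ae_eq_of_integral_abs_sub_eq_zero ha
    (show IntegrableOn (fun u => tsirelsonDrift t u x) (Icc 0 (t k₀)) volume by
      simpa only [tsirelsonDrift_eq_gridDrift] using
        integrableOn_gridDrift_intervalIndex ht (fun j => x (t j)) (t k₀)) hE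

section ProgMeas

variable {Ω : Type*} {M M' : ℝ → MeasurableSpace Ω} {u : ℝ → Ω → ℝ}

theorem ProgMeas.mono (hu : ProgMeas M u) (h : ∀ s, M s ≤ M' s) : ProgMeas M' u :=
  fun s hs => (hu s hs).mono (sup_le_sup le_rfl (MeasurableSpace.comap_mono (h s))) le_rfl

theorem ProgMeas.measurable_apply (hu : ProgMeas M u) {r : ℝ} (hr : 0 ≤ r) :
    Measurable[M r] (u r) := by
  let _ := M r
  exact (hu r hr).comp ((measurable_const (a := (⟨r, hr, le_rfl⟩ : Icc 0 r))).prodMk measurable_id)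

theorem ProgMeas.measurable_projIcc (hu : ProgMeas M u) {s : ℝ} (hs : 0 ≤ s) :
    Measurable[MeasurableSpace.prod inferInstance (M s)]
      fun p : ℝ × Ω => u (projIcc 0 s hs p.1) p.2 := by
  let _ := M s
  exact (hu s hs).comp (((continuous_projIcc (h := hs)).measurable.comp measurable_fst).prodMk
    measurable_snd)

theorem ProgMeas.integrableOn_Icc (hu : ProgMeas M u) {s C : ℝ} (hs : 0 ≤ s) (ω : Ω)
    (hC : ∀ r, ‖u r ω‖ ≤ C) : IntegrableOn (fun r => u r ω) (Icc 0 s) := by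
  let _ := M s
  have hmeas : AEStronglyMeasurable (fun r => u r ω) (volume.restrict (Icc 0 s)) :=
    ((hu.measurable_projIcc hs).comp (measurable_prodMk_right (y := ω))).aestronglyMeasurable.congr
      ((ae_restrict_mem measurableSet_Icc).mono fun r hr => by simp [projIcc_of_mem hs hr])
  exact .of_bound measure_Icc_lt_top hmeas C (Eventually.of_forall hC)

theorem ProgMeas.integral (hu : ProgMeas M u) :
    ProgMeas M fun s ω => ∫ r in Icc 0 s, u r ω := by
  intro s hs
  let _ := M s
  set K : (Icc 0 s × Ω) × ℝ → ℝ := fun q =>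
    if q.2 ∈ Icc 0 (q.1.1 : ℝ) then u (projIcc 0 s hs q.2) q.1.2 else 0
  have hK : Measurable K := by
    refine Measurable.ite ((measurable_snd measurableSet_Ici).inter
      (measurableSet_le measurable_snd (measurable_subtype_coe.comp
        (measurable_fst.comp measurable_fst)))) ?_ measurable_const
    exact (hu.measurable_projIcc hs).comp
      (measurable_snd.prodMk (measurable_snd.comp measurable_fst))
  have hKint : ∀ p : Icc 0 s × Ω, ∫ r, K (p, r) = ∫ r in Icc 0 (p.1 : ℝ), u r p.2 := by
    intro p
    rw [← integral_indicator measurableSet_Icc]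
    refine integral_congr_ae (Eventually.of_forall fun r => ?_)
    by_cases hr : r ∈ Icc 0 (p.1 : ℝ)
    · simp only [K, if_pos hr, indicator_of_mem hr, projIcc_of_mem hs ⟨hr.1, hr.2.trans p.1.2.2⟩]
    · simp only [K, if_neg hr, indicator_of_notMem hr]
  simpa only [hKint] using (hK.stronglyMeasurable.integral_prod_right' (ν := volume)).measurable

theorem progMeas_of_continuous (hM : Monotone M) (hcont : ∀ ω, Continuous fun s => u s ω)
    (hadapt : ∀ r, 0 ≤ r → Measurable[M r] (u r)) : ProgMeas M u := fun s hs => by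
  let _ := M s
  exact measurable_uncurry_of_continuous_of_measurable (u := fun (r : Icc 0 s) ω => u r ω)
    (fun ω => (hcont ω).comp continuous_subtype_val)
    fun r => (hadapt r r.2.1).mono (hM r.2.2) le_rfl

theorem augFilt_mono [MeasurableSpace Ω] {P : Measure Ω} {E : Type*} [MeasurableSpace E]
    {B : ℝ → Ω → E} : Monotone (augFilt P B) := fun _ _ hab =>
  sup_le_sup_right (biSup_mono fun _ hr => ⟨hr.1, hr.2.trans hab⟩) _

theorem measurable_augFilt [MeasurableSpace Ω] {P : Measure Ω} {E : Type*} [MeasurableSpace E]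
    {B : ℝ → Ω → E} {r : ℝ} (hr : 0 ≤ r) : Measurable[augFilt P B r] (B r) :=
  measurable_iff_comap_le.2 (le_sup_of_le_left
    (le_biSup (fun r' => MeasurableSpace.comap (B r') inferInstance) ⟨hr, le_rfl⟩))

theorem ae_restrict_prod_of_ae_ae [mΩ : MeasurableSpace Ω] {P : Measure Ω} [SFinite P]
    {v : ℝ → Ω → ℝ} {T : ℝ} (hT : 0 ≤ T) (hu : ProgMeas (fun _ => mΩ) u)
    (hv : ProgMeas (fun _ => mΩ) v)
    (h : ∀ᵐ ω ∂P, ∀ᵐ s ∂volume.restrict (Icc 0 T), u s ω = v s ω) :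
    ∀ᵐ p ∂(volume.restrict (Icc 0 T)).prod P, u p.1 p.2 = v p.1 p.2 := by
  set S := {p : ℝ × Ω | p.1 ∈ Icc 0 T ∧
    u (projIcc 0 T hT p.1) p.2 = v (projIcc 0 T hT p.1) p.2}
  have hS : MeasurableSet S := (measurable_fst measurableSet_Icc).inter
    (measurableSet_eq_fun (hu.measurable_projIcc hT) (hv.measurable_projIcc hT))
  have hSae : ∀ᵐ p ∂(volume.restrict (Icc 0 T)).prod P, p ∈ S := by
    refine (Measure.ae_prod_iff_ae_ae hS).2 ((Measure.ae_ae_comm hS).2 (h.mono fun ω hω => ?_))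
    filter_upwards [hω, ae_restrict_mem measurableSet_Icc] with s hs hmem
    exact ⟨hmem, by simpa [projIcc_of_mem hT hmem] using hs⟩
  filter_upwards [hSae] with p ⟨hmem, hp⟩
  simpa [projIcc_of_mem hT hmem] using hp

end ProgMeas

section Construction

variable {Ω : Type*} {T : ℝ} {t : ℤ → ℝ} {M : ℝ → MeasurableSpace Ω} {α B : ℝ → Ω → ℝ}

theorem measurable_gridDrift {m : MeasurableSpace Ω} {y : ℤ → Ω → ℝ} {j : ℤ}
    (hy : j ≤ -1 → Measurable[m] (y j) ∧ Measurable[m] (y (j - 1))) :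
    Measurable[m] fun ω => gridDrift t (fun i => y i ω) j := by
  unfold gridDrift
  split_ifs with hj
  · exact (((hy hj).1.sub (hy hj).2).div_const _).fract
  · exact measurable_const

theorem progMeas_gridDrift (ht : TsirelsonTimes T t) (hM : Monotone M) {y : ℤ → Ω → ℝ}
    (hy : ∀ j ≤ 0, Measurable[M (t j)] (y j)) :
    ProgMeas M fun s ω => gridDrift t (fun j => y j ω) (intervalIndex t s) := by
  intro s hs
  let _ := M s
  set g : ℤ × Ω → ℝ := fun q => if t q.1 ≤ s then gridDrift t (fun j => y j q.2) q.1 else 0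
  have hg : Measurable g := measurable_from_prod_countable_right fun j => by
    by_cases hjs : t j ≤ s
    · simp only [g, if_pos hjs]
      refine measurable_gridDrift fun hj => ⟨(hy j (by omega)).mono (hM hjs) le_rfl,
        (hy (j - 1) (by omega)).mono (hM ((ht.le (by omega) (by omega)).trans hjs)) le_rfl⟩
    · simp only [g, if_neg hjs]
      exact measurable_const
  have heq : (fun p : Icc 0 s × Ω => gridDrift t (fun j => y j p.2) (intervalIndex t p.1)) =
      fun p => g (intervalIndex t p.1, p.2) := by
    funext p
    by_cases hj : intervalIndex t p.1 ≤ -1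
    · simp only [g, if_pos ((intervalIndex_spec hj).1.trans p.1.2.2)]
    · simp only [g, intervalIndex_of_not_le hj, gridDrift, if_neg (show ¬(0 : ℤ) ≤ -1 by omega),
        ite_self]
  rw [heq]
  exact hg.comp (((measurable_intervalIndex ht).comp (measurable_subtype_coe.comp
    measurable_fst)).prodMk measurable_snd)

theorem progMeas_tsirelsonDrift (ht : TsirelsonTimes T t) (hM : Monotone M) {X : ℝ → Ω → ℝ}
    (hX : ∀ j ≤ 0, Measurable[M (t j)] (X (t j))) :
    ProgMeas M fun s ω => tsirelsonDrift t s (X · ω) := by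
  simpa only [tsirelsonDrift_eq_gridDrift] using progMeas_gridDrift ht hM hX

theorem progMeas_addDrift (hα : ProgMeas M α) (hB : ProgMeas M B) :
    ProgMeas M fun s ω => addDrift (B · ω) (α · ω) s :=
  fun s hs => (hα.integral s hs).add (hB s hs)

theorem measurable_approxGrid (ht : TsirelsonTimes T t) (hM : Monotone M) (hα : ProgMeas M α)
    (hB : ProgMeas M B) (k : ℤ) {j : ℤ} (hj : j ≤ 0) :
    Measurable[M (t j)] fun ω => approxGrid t (B · ω) (α · ω) k j := by
  refine forall_le_induction (k := k) (J := 0)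
    (p := fun j => Measurable[M (t j)] fun ω => approxGrid t (B · ω) (α · ω) k j)
    (fun i hi hi₀ => ?_) (fun i hi hi₀ ih => ?_) j hj
  · simp only [approxGrid, tsirelsonGrid_of_le hi]
    exact (progMeas_addDrift hα hB).measurable_apply (ht.nonneg (by omega))
  · have hmono : ∀ {i'}, i' ≤ i → M (t i') ≤ M (t (i + 1)) := fun hi' =>
      hM (ht.le (by omega) (by omega))
    have h₁ := (ih i le_rfl).mono (hmono le_rfl) le_rfl
    have h₀ := (ih (i - 1) (by omega)).mono (hmono (by omega)) le_rfl
    have hB₁ := hB.measurable_apply (r := t (i + 1)) (ht.nonneg (by omega))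
    have hB₀ := (hB.measurable_apply (r := t i) (ht.nonneg (by omega))).mono (hmono le_rfl) le_rfl
    simp only [approxGrid, tsirelsonGrid_add_one hi, tsirelsonStep] at h₁ h₀ ⊢
    let _ := M (t (i + 1))
    exact (h₁.add (((h₁.sub h₀).div_const _).fract.mul_const _)).add (hB₁.sub hB₀)

theorem progMeas_approxDrift (ht : TsirelsonTimes T t) (hM : Monotone M) (hα : ProgMeas M α)
    (hB : ProgMeas M B) (k : ℤ) : ProgMeas M fun s ω => approxDrift t (B · ω) (α · ω) k s :=
  fun s hs => by
    let _ := M s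
    exact Measurable.ite ((measurable_subtype_coe.comp measurable_fst) measurableSet_Iio) (hα s hs)
      (progMeas_gridDrift ht hM (fun _ hj => measurable_approxGrid ht hM hα hB k hj) s hs)

theorem progMeas_limDrift (ht : TsirelsonTimes T t) (hM : Monotone M) (hα : ProgMeas M α)
    (hB : ProgMeas M B) : ProgMeas M fun s ω => limDrift t (B · ω) (α · ω) s :=
  fun s hs => Measurable.limsup fun n => progMeas_approxDrift ht hM hα hB (-n) s hs

theorem measurable_integral_abs_sub_tsirelsonDrift [m : MeasurableSpace Ω]
    (ht : TsirelsonTimes T t) {X : ℝ → Ω → ℝ} (hα : ProgMeas (fun _ => m) α)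
    (hX : ProgMeas (fun _ => m) X) {c : ℝ} (hc : 0 ≤ c) :
    Measurable fun ω => ∫ s in Icc 0 c, |α s ω - tsirelsonDrift t s (X · ω)| :=
  ProgMeas.measurable_apply (ProgMeas.integral fun s hs => ((hα s hs).sub
    (progMeas_tsirelsonDrift ht monotone_const (fun _ hj => hX.measurable_apply (ht.nonneg hj))
      s hs)).abs) hc

end Construction

theorem strong_solution_from_full_Einf_general
    (T : ℝ) (hT : 0 < T) (t : ℤ → ℝ) (ht : TsirelsonTimes T t)
    {Ω : Type*} [MeasurableSpace Ω] (P : Measure Ω) [IsProbabilityMeasure P]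
    (F : ℝ → MeasurableSpace Ω)
    (hF_le : ∀ s : ℝ, F s ≤ (inferInstance : MeasurableSpace Ω))
    (B X α : ℝ → Ω → ℝ) (hB : IsBM P F B)
    (hα_prog : ProgMeas F α) (hα_mem : ∀ s ω, α s ω ∈ Set.Icc (0 : ℝ) 1)
    (hX_prog : ProgMeas F X)
    (hsde : ∀ᵐ ω ∂P, ∀ s ∈ Set.Icc (0 : ℝ) T,
      X s ω = (∫ r in Set.Icc (0 : ℝ) s, α r ω) + B s ω)
    (hopen : ProgMeas (augFilt P B) α)
    (hEinf : P (⋃ k : ℤ, ⋃ _ : k ≤ -1,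
      {ω | (∫ s in Set.Icc (0 : ℝ) (t k),
        |α s ω - tsirelsonDrift t s (fun u => X u ω)|) = 0}) = 1) :
    ∃ αh Xh : ℝ → Ω → ℝ,
      ProgMeas (augFilt P B) αh ∧ ProgMeas (augFilt P B) Xh ∧
      (∀ᵐ p ∂((volume.restrict (Set.Icc (0 : ℝ) T)).prod P),
        αh p.1 p.2 = tsirelsonDrift t p.1 (fun u => Xh u p.2) ∧
        Xh p.1 p.2 = (∫ r in Set.Icc (0 : ℝ) p.1, αh r p.2) + B p.1 p.2) := by
  set αh : ℝ → Ω → ℝ := fun s ω => limDrift t (B · ω) (α · ω) s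
  set Xh : ℝ → Ω → ℝ := fun s ω => addDrift (B · ω) (αh · ω) s
  have hBaug : ProgMeas (augFilt P B) B :=
    progMeas_of_continuous augFilt_mono hB.2.1 fun _ hr => measurable_augFilt hr
  have hαh_aug := progMeas_limDrift ht augFilt_mono hopen hBaug
  refine ⟨αh, Xh, hαh_aug, progMeas_addDrift hαh_aug hBaug, ?_⟩
  -- Fubini below needs joint measurability for the ambient σ-algebra as well.
  have hα : ProgMeas (fun _ => ‹MeasurableSpace Ω›) α := hα_prog.mono hF_le
  have hB' : ProgMeas (fun _ => ‹MeasurableSpace Ω›) B := progMeas_of_continuous monotone_const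
    hB.2.1 fun r hr => (hB.2.2.1 r hr).mono (hF_le r) le_rfl
  have hαh := progMeas_limDrift ht monotone_const hα hB'
  have hE : MeasurableSet (⋃ k : ℤ, ⋃ _ : k ≤ -1, {ω | (∫ s in Set.Icc (0 : ℝ) (t k),
      |α s ω - tsirelsonDrift t s (fun u => X u ω)|) = 0}) :=
    .iUnion fun k => .iUnion fun hk => measurable_integral_abs_sub_tsirelsonDrift ht hα
      (hX_prog.mono hF_le) (ht.nonneg (by omega)) (measurableSet_singleton 0)
  refine (ae_restrict_prod_of_ae_ae hT.le hαh (progMeas_tsirelsonDrift ht monotone_const (X := Xh)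
    fun j hj => (progMeas_addDrift hαh hB').measurable_apply (ht.nonneg hj)) ?_).mono
    fun p hp => ⟨hp, rfl⟩
  filter_upwards [hsde, (mem_ae_iff_prob_eq_one hE).2 hEinf] with ω hω hωE
  obtain ⟨k₀, hk₀, hk₀E⟩ := mem_iUnion₂.1 hωE
  have hαω : IntegrableOn (α · ω) (Icc 0 (t k₀)) := hα.integrableOn_Icc (ht.nonneg (by omega)) ω
    fun r => (Real.norm_of_nonneg (hα_mem r ω).1).trans_le (hα_mem r ω).2
  exact (solvesTsirelsonUpTo_of_integral_eq_zero ht (fun j hj => hω _ ⟨ht.nonneg hj, ht.le_T hj⟩)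
    hαω hk₀E).ae_limDrift_eq_tsirelsonDrift ht (by omega) T

/-- If, for an open-loop weak solution, `P(E_∞) = 1` where
`E_k = {∫_0^{t_k} |α_s - μ(s, X)| ds = 0}` and `E_∞ = lim_{k→-∞} E_k`, then there exist
`𝔽^B`-progressively measurable processes `α̂, X̂` with `α̂_s = μ(s, X̂)` and
`X̂_s = ∫_0^s α̂_r dr + B_s` for `ds × dP`-a.e. `(s, ω)`; i.e. Tsirelson's SDE then admits
a strong solution. -/
theorem strong_solution_from_full_Einf
    (T : ℝ) (hT : 0 < T) (t : ℤ → ℝ) (ht : TsirelsonTimes T t)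
    {Ω : Type*} [MeasurableSpace Ω] (P : Measure Ω) [IsProbabilityMeasure P]
    (F : ℝ → MeasurableSpace Ω)
    (hF_mono : ∀ s u : ℝ, s ≤ u → F s ≤ F u)
    (hF_le : ∀ s : ℝ, F s ≤ (inferInstance : MeasurableSpace Ω))
    (B X α : ℝ → Ω → ℝ) (hB : IsBM P F B)
    (hα_prog : ProgMeas F α) (hα_mem : ∀ s ω, α s ω ∈ Set.Icc (0 : ℝ) 1)
    (hX_cont : ∀ ω, Continuous fun s => X s ω) (hX_prog : ProgMeas F X)
    (hsde : ∀ᵐ ω ∂P, ∀ s ∈ Set.Icc (0 : ℝ) T,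
      X s ω = (∫ r in Set.Icc (0 : ℝ) s, α r ω) + B s ω)
    (hopen : ProgMeas (augFilt P B) α)
    (hEinf : P (⋃ k : ℤ, ⋃ _ : k ≤ -1,
      {ω | (∫ s in Set.Icc (0 : ℝ) (t k),
        |α s ω - tsirelsonDrift t s (fun u => X u ω)|) = 0}) = 1) :
    ∃ αh Xh : ℝ → Ω → ℝ,
      ProgMeas (augFilt P B) αh ∧ ProgMeas (augFilt P B) Xh ∧
      (∀ᵐ p ∂((volume.restrict (Set.Icc (0 : ℝ) T)).prod P),
        αh p.1 p.2 = tsirelsonDrift t p.1 (fun u => Xh u p.2) ∧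
        Xh p.1 p.2 = (∫ r in Set.Icc (0 : ℝ) p.1, αh r p.2) + B p.1 p.2) :=
  strong_solution_from_full_Einf_general T hT t ht P F hF_le B X α hB hα_prog hα_mem hX_prog hsde
    hopen hEinf

end
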